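/- arXiv:2403.07646 — 3 statements merged into one kernel-verified Lean document; each statement's English description precedes it below -/
import Mathlib

section
/- Let G be a connected simple graph such that D₂(G) is connected. Then diam(D₂(G)) ≥ ⌈diam(G)/2⌉. -/
open SimpleGraph

/-- The 2-distance graph of `G`: same vertex set, two vertices adjacent iff
their distance in `G` equals `2`. -/
def twoDistGraph {V : Type*} (G : SimpleGraph V) : SimpleGraph V where
  Adj u v := G.dist u v = 2
  symm := ⟨by intro u v h; rwa [SimpleGraph.dist_comm]⟩
  loopless := ⟨by intro v h; simp [SimpleGraph.dist_self] at h⟩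

namespace SimpleGraph

variable {V : Type*} {G H : SimpleGraph V} {k : ℕ}

lemma Walk.dist_le_mul_length (hG : G.Connected) (hk : ∀ a b, H.Adj a b → G.dist a b ≤ k)
    {u v : V} (p : H.Walk u v) : G.dist u v ≤ k * p.length := by
  induction p with
  | nil => simp
  | @cons a b c hab p ih =>
    calc G.dist a c ≤ G.dist a b + G.dist b c := hG.dist_triangle
      _ ≤ k + k * p.length := Nat.add_le_add (hk a b hab) ih
      _ = k * (Walk.cons hab p).length := by rw [Walk.length_cons]; ring

lemma diam_le_mul_diam [Finite V] (hG : G.Connected) (hH : H.Connected)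
    (hk : ∀ a b, H.Adj a b → G.dist a b ≤ k) : G.diam ≤ k * H.diam := by
  have : Nonempty V := hG.nonempty
  obtain ⟨u, v, huv⟩ := G.exists_dist_eq_diam
  obtain ⟨p, hp⟩ := hH.exists_walk_length_eq_dist u v
  calc G.diam = G.dist u v := huv.symm
    _ ≤ k * p.length := p.dist_le_mul_length hG hk
    _ ≤ k * H.diam := by
      rw [hp]
      exact Nat.mul_le_mul_left k (dist_le_diam (connected_iff_ediam_ne_top.mp hH))

end SimpleGraph

theorem stmt_1 {V : Type*} [Fintype V] (G : SimpleGraph V)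
    (hG : G.Connected) (h2 : (twoDistGraph G).Connected) :
    (G.diam + 1) / 2 ≤ (twoDistGraph G).diam := by
  have h := diam_le_mul_diam hG h2 (k := 2) fun _ _ hab => le_of_eq hab
  omega
end

section
/- Let G be a graph with diam(G) = 3 and suppose a₁a₂a₃a₄a₅a₆a₇ is a path in D₂(G) such that d₂(a₁,a₇) = 6 (i.e., the path is geodesic in D₂(G)). Then d_G(a₁, a₃) = 1. -/
/-!
A vertex `y` with `d(x, y) = d(y, z) = 2` is a midpoint of a path of length 2 from `x` to `z`
in `D₂(G)`, so the geodesic `a` forbids such midpoints between `a 0` and `a 5` and between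
`a 2` and `a 5`, and forbids `D₂`-paths of length 3 from `a 0` to `a 5`. As `a 0` and `a 2` are
not `D₂`-adjacent, `d(a 0, a 2)` is 1 or 3. If it were 3, take a geodesic `a 0, p, q, a 2` in `G`.
If `d(a 0, a 5) = 1`, the triangle inequality forces `d(q, a 5) = 2`, a forbidden midpoint.
If `d(a 0, a 5) = 3`, then `d(p, a 5) = 3`; the neighbour `r` of `p` on a geodesic to `a 5`
must lie within distance 1 of both `a 0` and `q` (otherwise `a 0, r, a 5` or `a 0, q, r, a 5`
is too short a path in `D₂(G)`), which puts it at distance 2 from `a 2`: a forbidden midpoint.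
-/

open SimpleGraph

namespace SimpleGraph

variable {V : Type*} {G : SimpleGraph V}

lemma exists_adj_dist_eq_of_dist_eq_add_one {x y : V} {n : ℕ} (h : G.dist x y = n + 1) :
    ∃ p, G.Adj x p ∧ G.dist p y = n := by
  obtain ⟨w, hw⟩ := exists_walk_of_dist_ne_zero (show G.dist x y ≠ 0 by omega)
  cases w with
  | nil => simp at h
  | cons hxp w =>
    refine ⟨_, hxp, le_antisymm ?_ ?_⟩
    · have := dist_le w
      rw [Walk.length_cons, h] at hw
      omega
    · have := hxp.reachable.dist_triangle_left y
      rw [dist_eq_one_iff_adj.mpr hxp] at this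
      omega

lemma Connected.exists_geodesic_of_dist_eq_three (hG : G.Connected) {u v : V}
    (h : G.dist u v = 3) : ∃ p q, G.dist u p = 1 ∧ G.dist p q = 1 ∧ G.dist q v = 1 ∧
      G.dist u q = 2 ∧ G.dist p v = 2 := by
  obtain ⟨p, hup, hpv⟩ := exists_adj_dist_eq_of_dist_eq_add_one h
  obtain ⟨q, hpq, hqv⟩ := exists_adj_dist_eq_of_dist_eq_add_one hpv
  rw [← dist_eq_one_iff_adj] at hup hpq
  refine ⟨p, q, hup, hpq, hqv, ?_, hpv⟩
  have := hG.dist_triangle (u := u) (v := p) (w := q)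
  have := hG.dist_triangle (u := u) (v := q) (w := v)
  omega

end SimpleGraph

section TwoDistGraph

variable {V : Type*} {G : SimpleGraph V}

lemma dist_ne_two_of_one_lt_twoDistGraph_dist {x y : V} (h : 1 < (twoDistGraph G).dist x y) :
    G.dist x y ≠ 2 := fun h₂ ↦ by
  rw [dist_eq_one_iff_adj.mpr (show (twoDistGraph G).Adj x y from h₂)] at h
  omega

lemma twoDistGraph_dist_le_two {x y z : V} (hxy : G.dist x y = 2) (hyz : G.dist y z = 2) :
    (twoDistGraph G).dist x z ≤ 2 :=
  dist_le (G := twoDistGraph G) (.cons hxy (.cons hyz .nil))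

lemma twoDistGraph_dist_le_three {x y z t : V} (hxy : G.dist x y = 2)
    (hyz : G.dist y z = 2) (hzt : G.dist z t = 2) : (twoDistGraph G).dist x t ≤ 3 :=
  dist_le (G := twoDistGraph G) (.cons hxy (.cons hyz (.cons hzt .nil)))

lemma dist_eq_one_or_three_of_one_lt_twoDistGraph_dist (hG : G.Connected)
    (hle : ∀ x y, G.dist x y ≤ 3) {x y : V} (h : 1 < (twoDistGraph G).dist x y) :
    G.dist x y = 1 ∨ G.dist x y = 3 := by
  have hne : x ≠ y := by rintro rfl; simp at h
  have := hG.pos_dist_of_ne hne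
  have := dist_ne_two_of_one_lt_twoDistGraph_dist h
  have := hle x y
  omega

theorem dist_ne_three_of_lt_twoDistGraph_dist (hG : G.Connected) (hle : ∀ x y, G.dist x y ≤ 3)
    {u v w : V} (huw : 3 < (twoDistGraph G).dist u w) (hvw : 2 < (twoDistGraph G).dist v w) :
    G.dist u v ≠ 3 := by
  intro huv
  have tri : ∀ x y z, G.dist x z ≤ G.dist x y + G.dist y z := fun _ _ _ ↦ hG.dist_triangle
  have comm : ∀ x y, G.dist x y = G.dist y x := fun _ _ ↦ dist_comm
  have no_mid_uw : ∀ y, G.dist u y = 2 → G.dist y w ≠ 2 := fun y h₁ h₂ ↦ by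
    have := twoDistGraph_dist_le_two h₁ h₂; omega
  have no_mid_vw : ∀ y, G.dist v y = 2 → G.dist y w ≠ 2 := fun y h₁ h₂ ↦ by
    have := twoDistGraph_dist_le_two h₁ h₂; omega
  have hvw₂ := dist_ne_two_of_one_lt_twoDistGraph_dist (by omega : 1 < (twoDistGraph G).dist v w)
  obtain ⟨p, q, hup, hpq, hqv, huq, hpv⟩ := hG.exists_geodesic_of_dist_eq_three huv
  have hpw : G.dist p w ≠ 2 := no_mid_vw p (by rw [comm]; exact hpv)
  obtain huw₁ | huw₃ := dist_eq_one_or_three_of_one_lt_twoDistGraph_dist hG hle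
    (by omega : 1 < (twoDistGraph G).dist u w)
  · have hvw₃ : G.dist v w = 3 := by
      have := tri u w v; have := comm v w; have := hle v w
      omega
    have hqw : G.dist q w = 2 := by
      have := tri p u w; have := tri q p w; have := tri v q w
      have := comm p u; have := comm q p; have := comm v q
      omega
    exact no_mid_uw q huq hqw
  · have hpw₃ : G.dist p w = 3 := by
      have := tri u p w; have := hle p w
      omega
    obtain ⟨r, hpr, hrw⟩ := exists_adj_dist_eq_of_dist_eq_add_one hpw₃
    rw [← dist_eq_one_iff_adj] at hpr
    have hur : G.dist u r ≤ 1 := by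
      have := tri u p r; have := no_mid_uw r
      omega
    have hqr : G.dist q r ≤ 1 := by
      have := tri q p r; have := comm q p
      have : G.dist q r ≠ 2 := fun h ↦ by
        have := twoDistGraph_dist_le_three huq h hrw; omega
      omega
    have hvr : G.dist v r = 2 := by
      have := tri u r v; have := tri r q v; have := comm v r; have := comm r q
      omega
    exact no_mid_vw r hvr hrw

end TwoDistGraph

theorem stmt_4_general {V : Type*} (G : SimpleGraph V)
    (hG : G.Connected) (hdiam : G.diam = 3) (a : Fin 7 → V)
    (hgeo : ∀ i j : Fin 7,
      (twoDistGraph G).dist (a i) (a j) = ((i : ℤ) - (j : ℤ)).natAbs) :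
    G.dist (a 0) (a 2) = 1 := by
  have hle : ∀ x y, G.dist x y ≤ 3 := fun _ _ ↦
    hdiam ▸ dist_le_diam (ediam_ne_top_of_diam_ne_zero (by omega))
  have h02 : (twoDistGraph G).dist (a 0) (a 2) = 2 := hgeo 0 2
  have h05 : (twoDistGraph G).dist (a 0) (a 5) = 5 := hgeo 0 5
  have h25 : (twoDistGraph G).dist (a 2) (a 5) = 3 := hgeo 2 5
  refine (dist_eq_one_or_three_of_one_lt_twoDistGraph_dist hG hle (by omega)).resolve_right ?_
  exact dist_ne_three_of_lt_twoDistGraph_dist hG hle (w := a 5) (by omega) (by omega)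

theorem stmt_4 {V : Type*} [Fintype V] (G : SimpleGraph V)
    (hG : G.Connected) (hdiam : G.diam = 3) (a : Fin 7 → V)
    (hgeo : ∀ i j : Fin 7,
      (twoDistGraph G).dist (a i) (a j) = ((i : ℤ) - (j : ℤ)).natAbs) :
    G.dist (a 0) (a 2) = 1 :=
  stmt_4_general G hG hdiam a hgeo
end

section
/- Let G be a graph with diam(G) = 3 and let a₁,...,a₇ be a geodesic path of length 6 in D₂(G). If A = {a₁,...,a₇} induces in G a subgraph of diameter 2, then any vertex b of G adjacent (in G) to some vertex of A satisfies |N_G(b) ∩ A| ≥ 4. -/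
/-!
Write `N`, `T` for the sets of indices `j` with `dist b aⱼ` equal to `1`, resp. `2`. Since
`a` is a geodesic of `D₂(G)`, the vertices `aᵢ, aⱼ` with `|i - j| ≥ 2` are not at distance `2`,
so as `A` has diameter `2` they are adjacent in `G`. Consequently `T` lies within three
consecutive indices, and an index `k ∉ N` at index distance `≥ 2` from some `i ∈ N` lies in `T`
(via `b - aᵢ - aₖ`). If some index were in neither `N` nor `T`, then it and `N` would together
lie within three consecutive indices, and seven indices could not be covered. Hence the
complement of `N` is contained in `T` and has at most three elements. When `b = aₖ`, the
complement of `N` lies within `k - 1, k, k + 1` directly.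
-/

open SimpleGraph

open Finset

namespace SimpleGraph

variable {V W : Type*} {G : SimpleGraph V}

lemma Hom.dist_map_le {H : SimpleGraph W} (f : G →g H) {u v : V} (h : G.Reachable u v) :
    H.dist (f u) (f v) ≤ G.dist u v := by
  obtain ⟨p, hp⟩ := h.exists_walk_length_eq_dist
  calc H.dist (f u) (f v) ≤ (p.map f).length := dist_le _
    _ = G.dist u v := by rw [Walk.length_map, hp]

lemma reachable_and_dist_le_diam_induce {s : Set V} (hs : (G.induce s).diam ≠ 0) {u v : V}
    (hu : u ∈ s) (hv : v ∈ s) : G.Reachable u v ∧ G.dist u v ≤ (G.induce s).diam := by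
  have hreach : (G.induce s).Reachable ⟨u, hu⟩ ⟨v, hv⟩ :=
    preconnected_of_ediam_ne_top (ediam_ne_top_of_diam_ne_zero hs) _ _
  refine ⟨hreach.map (Embedding.induce s).toHom, ?_⟩
  calc G.dist u v ≤ (G.induce s).dist ⟨u, hu⟩ ⟨v, hv⟩ :=
        (Embedding.induce s).toHom.dist_map_le hreach
    _ ≤ (G.induce s).diam := dist_le_diam (ediam_ne_top_of_diam_ne_zero hs)

lemma dist_eq_two_of_adj_of_adj {u w v : V} (huw : G.Adj u w) (hwv : G.Adj w v) (huv : u ≠ v)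
    (hnadj : ¬G.Adj u v) : G.dist u v = 2 := by
  have hle : G.dist u v ≤ 2 := dist_le (.cons huw (.cons hwv .nil))
  have hpos : 0 < G.dist u v := (huw.reachable.trans hwv.reachable).pos_dist_of_ne huv
  have hne : G.dist u v ≠ 1 := fun h => hnadj (dist_eq_one_iff_adj.mp h)
  omega

end SimpleGraph

section Indices

variable {n : ℕ}

def Finset.Narrow (s : Finset (Fin n)) : Prop :=
  ∀ i ∈ s, ∀ j ∈ s, ((i : ℤ) - j).natAbs ≤ 2

lemma Finset.Narrow.mono {s t : Finset (Fin n)} (ht : t.Narrow) (hst : s ⊆ t) : s.Narrow :=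
  fun i hi j hj => ht i (hst hi) j (hst hj)

lemma Finset.Narrow.card_le_three {s : Finset (Fin n)} (hs : s.Narrow) : #s ≤ 3 := by
  rcases s.eq_empty_or_nonempty with rfl | hne
  · simp
  set m := s.min' hne
  have hsub : s.map Fin.valEmbedding ⊆ Icc (m : ℕ) (m + 2) := by
    intro x hx
    obtain ⟨i, hi, rfl⟩ := mem_map.mp hx
    have hmi : m ≤ i := s.min'_le i hi
    have := hs i hi m (s.min'_mem hne)
    rw [mem_Icc]
    simp only [Fin.valEmbedding_apply]
    omega
  calc #s = #(s.map Fin.valEmbedding) := (card_map _).symm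
    _ ≤ #(Icc (m : ℕ) (m + 2)) := card_le_card hsub
    _ = 3 := by rw [Nat.card_Icc]; omega

lemma Finset.compl_subset_of_two_le_natAbs_sub (hn : 7 ≤ n) {N T : Finset (Fin n)}
    (hN : N.Nonempty) (hT : T.Narrow)
    (hfar : ∀ i ∈ N, ∀ k ∉ N, 2 ≤ ((i : ℤ) - k).natAbs → k ∈ T) : Nᶜ ⊆ T := by
  intro k hk
  by_contra hkT
  set R := (N ∪ T)ᶜ
  have hclose : ∀ i ∈ N, ∀ r ∈ R, ((i : ℤ) - r).natAbs ≤ 1 := by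
    intro i hi r hr
    simp only [R, mem_compl, mem_union, not_or] at hr
    by_contra h
    exact hr.2 (hfar i hi r hr.1 (by omega))
  obtain ⟨i₀, hi₀⟩ := hN
  have hkR : k ∈ R := by simp_all [R]
  have hNR : (N ∪ R).Narrow := by
    intro i hi j hj
    rcases mem_union.mp hi with hi | hi <;> rcases mem_union.mp hj with hj | hj
    · have := hclose i hi k hkR; have := hclose j hj k hkR; omega
    · have := hclose i hi j hj; omega
    · have := hclose j hj i hi; omega
    · have := hclose i₀ hi₀ i hi; have := hclose i₀ hi₀ j hj; omega
  have hcover : (univ : Finset (Fin n)) ⊆ (N ∪ R) ∪ T := by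
    intro x _
    simp only [R, mem_union, mem_compl]
    tauto
  have := (card_le_card hcover).trans (card_union_le _ _)
  have := hNR.card_le_three
  have := hT.card_le_three
  simp only [card_univ, Fintype.card_fin] at *
  omega

end Indices

section NeighborIndices

variable {V : Type*} (G : SimpleGraph V) {n : ℕ} (a : Fin n → V)

open Classical in
noncomputable def neighborIndices (b : V) : Finset (Fin n) :=
  {j | G.Adj b (a j)}

variable {G a}

@[simp]
lemma mem_neighborIndices {b : V} {j : Fin n} : j ∈ neighborIndices G a b ↔ G.Adj b (a j) := by
  simp [neighborIndices]

lemma ncard_range_inter_neighborSet (ha : Function.Injective a) (b : V) :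
    (Set.range a ∩ G.neighborSet b).ncard = #(neighborIndices G a b) := by
  have : Set.range a ∩ G.neighborSet b = a '' ↑(neighborIndices G a b) := by
    ext v
    simp only [Set.mem_inter_iff, Set.mem_range, mem_neighborSet, Set.mem_image, mem_coe,
      mem_neighborIndices]
    constructor
    · rintro ⟨⟨j, rfl⟩, hj⟩
      exact ⟨j, hj, rfl⟩
    · rintro ⟨j, hj, rfl⟩
      exact ⟨⟨j, rfl⟩, hj⟩
  rw [this, Set.ncard_image_of_injective _ ha, Set.ncard_coe_finset]

end NeighborIndices

section Geodesic

variable {V : Type*} {G : SimpleGraph V} {n : ℕ} {a : Fin n → V}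
  (hgeo : ∀ i j : Fin n, (twoDistGraph G).dist (a i) (a j) = ((i : ℤ) - (j : ℤ)).natAbs)
include hgeo

lemma injective_of_twoDistGraph_dist : Function.Injective a := by
  intro i j hij
  have := hgeo i j
  rw [hij, dist_self] at this
  omega

lemma narrow_filter_dist_eq_two (b : V) :
    ({j | G.dist b (a j) = 2} : Finset (Fin n)).Narrow := by
  intro i hi j hj
  rw [mem_filter_univ] at hi hj
  have hbi : (twoDistGraph G).Adj (a i) b := by
    change G.dist (a i) b = 2; rwa [dist_comm]
  have hbj : (twoDistGraph G).Adj b (a j) := hj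
  rw [← hgeo i j]
  exact dist_le (.cons hbi (.cons hbj .nil))

lemma adj_of_two_le_natAbs_sub (hA : (G.induce (Set.range a)).diam = 2) {i j : Fin n}
    (hij : 2 ≤ ((i : ℤ) - j).natAbs) : G.Adj (a i) (a j) := by
  obtain ⟨hreach, hle⟩ := reachable_and_dist_le_diam_induce (hA ▸ two_ne_zero)
    (Set.mem_range_self i) (Set.mem_range_self j)
  have hpos : 0 < G.dist (a i) (a j) :=
    hreach.pos_dist_of_ne fun h => by rw [injective_of_twoDistGraph_dist hgeo h] at hij; simp at hij
  have hne : G.dist (a i) (a j) ≠ 2 := fun h => by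
    have := hgeo i j
    rw [dist_eq_one_iff_adj.mpr (show (twoDistGraph G).Adj (a i) (a j) from h)] at this
    omega
  exact dist_eq_one_iff_adj.mp (by omega)

lemma narrow_compl_neighborIndices_self (hA : (G.induce (Set.range a)).diam = 2) (k : Fin n) :
    (neighborIndices G a (a k))ᶜ.Narrow := by
  have hnear : ∀ j ∉ neighborIndices G a (a k), ((j : ℤ) - k).natAbs ≤ 1 := by
    intro j hj
    by_contra h
    exact hj (mem_neighborIndices.mpr (adj_of_two_le_natAbs_sub hgeo hA (by omega)))
  intro i hi j hj
  have := hnear i (mem_compl.mp hi)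
  have := hnear j (mem_compl.mp hj)
  omega

lemma compl_neighborIndices_subset (hn : 7 ≤ n) (hA : (G.induce (Set.range a)).diam = 2)
    {b : V} (hb : ∃ i, G.Adj b (a i)) (hbA : b ∉ Set.range a) :
    (neighborIndices G a b)ᶜ ⊆ ({j | G.dist b (a j) = 2} : Finset (Fin n)) := by
  obtain ⟨i₀, hi₀⟩ := hb
  refine compl_subset_of_two_le_natAbs_sub hn ⟨i₀, mem_neighborIndices.mpr hi₀⟩
    (narrow_filter_dist_eq_two hgeo b) fun i hi k hk hik => ?_
  rw [mem_neighborIndices] at hi hk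
  rw [mem_filter_univ]
  exact dist_eq_two_of_adj_of_adj hi (adj_of_two_le_natAbs_sub hgeo hA hik)
    (fun h => hbA ⟨k, h.symm⟩) hk

lemma narrow_compl_neighborIndices (hn : 7 ≤ n) (hA : (G.induce (Set.range a)).diam = 2)
    {b : V} (hb : ∃ i, G.Adj b (a i)) : (neighborIndices G a b)ᶜ.Narrow := by
  by_cases hbA : b ∈ Set.range a
  · obtain ⟨k, rfl⟩ := hbA
    exact narrow_compl_neighborIndices_self hgeo hA k
  · exact (narrow_filter_dist_eq_two hgeo b).mono
      (compl_neighborIndices_subset hgeo hn hA hb hbA)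

end Geodesic

theorem stmt_5_general {V : Type*} (G : SimpleGraph V)
    (a : Fin 7 → V)
    (hgeo : ∀ i j : Fin 7,
      (twoDistGraph G).dist (a i) (a j) = ((i : ℤ) - (j : ℤ)).natAbs)
    (hA : (G.induce (Set.range a)).diam = 2)
    (b : V) (hb : ∃ i : Fin 7, G.Adj b (a i)) :
    4 ≤ (Set.range a ∩ G.neighborSet b).ncard := by
  rw [ncard_range_inter_neighborSet (injective_of_twoDistGraph_dist hgeo)]
  have hcompl := (narrow_compl_neighborIndices hgeo le_rfl hA hb).card_le_three
  have hsum := card_add_card_compl (neighborIndices G a b)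
  rw [Fintype.card_fin] at hsum
  omega

theorem stmt_5 {V : Type*} [Fintype V] (G : SimpleGraph V)
    (hG : G.Connected) (hdiam : G.diam = 3) (a : Fin 7 → V)
    (hgeo : ∀ i j : Fin 7,
      (twoDistGraph G).dist (a i) (a j) = ((i : ℤ) - (j : ℤ)).natAbs)
    (hA : (G.induce (Set.range a)).diam = 2)
    (b : V) (hb : ∃ i : Fin 7, G.Adj b (a i)) :
    4 ≤ (Set.range a ∩ G.neighborSet b).ncard :=
  stmt_5_general G a hgeo hA b hb
end
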